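/- arXiv:2111.03722 — 4 statements merged into one kernel-verified Lean document; each statement's English description precedes it below -/
import Mathlib

section
/- Let W be an N×N entrywise-nonnegative irreducible real matrix, let λ_E, λ_Is, λ_Ia > 0, β_Is, β_Ia ≥ 0 with β_Is + β_Ia > 0, p_Is, p_Ia ∈ [0,1], and integer shape parameters k_E, k_Is, k_Ia ≥ 1. With Δ = W ⊗ δ and Σ = I_N ⊗ σ as defined, if (β_Is·p_Is·k_Is/λ_Is + β_Ia·p_Ia·k_Ia/λ_Ia)·ρ(W) < 1, then every complex eigenvalue of Δ + Σ has strictly negative real part, i.e., s(Δ + Σ) < 0. -/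
open Matrix Polynomial Kronecker



/-- The set of complex eigenvalues of a real square matrix: the roots of its
characteristic polynomial over `ℂ`. -/
noncomputable def eigSet {n : Type*} [Fintype n] [DecidableEq n] (M : Matrix n n ℝ) : Set ℂ :=
  {z : ℂ | ((M.map (algebraMap ℝ ℂ)).charpoly).IsRoot z}

/-- The spectral bound `s(M)`: the maximum real part of the eigenvalues. -/
noncomputable def specBound {n : Type*} [Fintype n] [DecidableEq n] (M : Matrix n n ℝ) : ℝ :=
  sSup (Complex.re '' eigSet M)

/-- The spectral radius `ρ(M)`: the maximum modulus of the eigenvalues. -/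
noncomputable def specRadius {n : Type*} [Fintype n] [DecidableEq n] (M : Matrix n n ℝ) : ℝ :=
  sSup ((fun z : ℂ => ‖z‖) '' eigSet M)

/-- `H_k`: `-1` on the diagonal, `1` on the first subdiagonal, `0` elsewhere. -/
def Hmat (k : ℕ) : Matrix (Fin k) (Fin k) ℝ :=
  Matrix.of fun i j => if (i : ℕ) = (j : ℕ) then -1 else if (i : ℕ) = (j : ℕ) + 1 then 1 else 0

/-- `F_k`: lower triangular matrix with all entries on and below the diagonal equal to `1`. -/
def Fmat (k : ℕ) : Matrix (Fin k) (Fin k) ℝ :=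
  Matrix.of fun i j => if (j : ℕ) ≤ (i : ℕ) then 1 else 0

/-- `G_{k₁,k₂}`: `1` in the upper-right corner, `0` elsewhere. -/
def Gmat (k1 k2 : ℕ) : Matrix (Fin k1) (Fin k2) ℝ :=
  Matrix.of fun i j => if (i : ℕ) = 0 ∧ (j : ℕ) = k2 - 1 then 1 else 0

/-- `J_{k₁,k₂}`: the all-ones matrix. -/
def Jmat (k1 k2 : ℕ) : Matrix (Fin k1) (Fin k2) ℝ :=
  Matrix.of fun _ _ => 1

/-- The block matrix σ with row/column blocks of sizes `(k_E, k_Is, k_Ia)`: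
`σ = [[λ_E·H_{k_E}, 0, 0], [p_Is·λ_E·G_{k_Is,k_E}, λ_Is·H_{k_Is}, 0],
      [p_Ia·λ_E·G_{k_Ia,k_E}, 0, λ_Ia·H_{k_Ia}]]`. -/
noncomputable def sigmaMat (lE lIs lIa pIs pIa : ℝ) (kE kIs kIa : ℕ) :
    Matrix (Fin kE ⊕ (Fin kIs ⊕ Fin kIa)) (Fin kE ⊕ (Fin kIs ⊕ Fin kIa)) ℝ :=
  Matrix.fromBlocks (lE • Hmat kE) 0
    (Matrix.fromRows ((pIs * lE) • Gmat kIs kE) ((pIa * lE) • Gmat kIa kE))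
    (Matrix.fromBlocks (lIs • Hmat kIs) 0 0 (lIa • Hmat kIa))

/-- The matrix δ: its first row is `(0,…,0, β_Is,…,β_Is, β_Ia,…,β_Ia)` (with `k_E` zeros,
`k_Is` copies of `β_Is`, `k_Ia` copies of `β_Ia`), and all other rows are zero. -/
def deltaMat (bIs bIa : ℝ) (kE kIs kIa : ℕ) :
    Matrix (Fin kE ⊕ (Fin kIs ⊕ Fin kIa)) (Fin kE ⊕ (Fin kIs ⊕ Fin kIa)) ℝ :=
  Matrix.of fun i j =>
    Sum.elim
      (fun i1 : Fin kE =>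
        if (i1 : ℕ) = 0 then
          Sum.elim (fun _ : Fin kE => (0 : ℝ))
            (Sum.elim (fun _ : Fin kIs => bIs) (fun _ : Fin kIa => bIa)) j
        else 0)
      (fun _ => 0) i


/-!
Suppose `z` is an eigenvalue of `Δ + Σ` with `Re z ≥ 0` and eigenvector `v`. Along each
Erlang chain `λ H_k` the eigen-equation forces the entries of `v` to be geometric with ratio
`λ / (z + λ)`, of modulus at most `1`. Following the inflow `c` into the first exposed stage of
every node through one generation of infection gives `c = g(z) • W c`, where
`g = transmissionGain`, so `g(z)⁻¹` is an eigenvalue of `W` and `1 ≤ ‖g(z)‖ ρ(W)`. But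
`‖g(z)‖ ≤ g(0)`, the threshold coefficient, so `g(0) ρ(W) < 1` is contradicted.
-/

theorem mem_eigSet_iff {n : Type*} [Fintype n] [DecidableEq n] {M : Matrix n n ℝ} {z : ℂ} :
    z ∈ eigSet M ↔ ∃ v ≠ 0, M.map (algebraMap ℝ ℂ) *ᵥ v = z • v := by
  change eval z _ = 0 ↔ _
  rw [eval_charpoly, ← exists_mulVec_eq_zero_iff]
  simp only [sub_mulVec, scalar_apply, ← smul_one_eq_diagonal, smul_mulVec, one_mulVec,
    sub_eq_zero, eq_comm]

theorem norm_le_specRadius {n : Type*} [Fintype n] [DecidableEq n] {M : Matrix n n ℝ} {μ : ℂ}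
    {u : n → ℂ} (hu : u ≠ 0) (h : M.map (algebraMap ℝ ℂ) *ᵥ u = μ • u) :
    ‖μ‖ ≤ specRadius M := by
  have hfin : (eigSet M).Finite := finite_setOfPred_isRoot (charpoly_monic _).ne_zero
  exact le_csSup (hfin.image _).bddAbove ⟨μ, mem_eigSet_iff.2 ⟨u, hu, h⟩, rfl⟩

theorem one_le_norm_mul_specRadius {n : Type*} [Fintype n] [DecidableEq n] {M : Matrix n n ℝ}
    {g : ℂ} {u : n → ℂ} (hu : u ≠ 0) (h : u = g • (M.map (algebraMap ℝ ℂ) *ᵥ u)) :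
    1 ≤ ‖g‖ * specRadius M := by
  have hg : g ≠ 0 := by
    rintro rfl
    exact hu (by simpa using h)
  have hM : M.map (algebraMap ℝ ℂ) *ᵥ u = g⁻¹ • u := by
    rw [h, smul_smul, inv_mul_cancel₀ hg, one_smul, ← h]
  calc 1 = ‖g‖ * ‖g⁻¹‖ := by rw [← norm_mul, mul_inv_cancel₀ hg, norm_one]
    _ ≤ ‖g‖ * specRadius M := by gcongr; exact norm_le_specRadius hu hM

theorem map_kronecker_add_one_kronecker_mulVec_apply {R S ι κ : Type*} [CommRing R]
    [CommRing S] [Fintype ι] [DecidableEq ι] [Fintype κ] (f : R →+* S) (A : Matrix ι ι R)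
    (B C : Matrix κ κ R) (v : ι × κ → S) (a : ι) (i : κ) :
    ((A ⊗ₖ B + 1 ⊗ₖ C).map f *ᵥ v) (a, i)
      = ∑ j, f (B i j) * ∑ b, f (A a b) * v (b, j) + ∑ j, f (C i j) * v (a, j) := by
  simp only [mulVec, dotProduct, map_apply, Matrix.add_apply, kroneckerMap_apply, map_add,
    map_mul, one_apply, apply_ite f, map_zero, add_mul, ite_mul, one_mul, zero_mul,
    Finset.sum_ite_irrel, Finset.sum_const_zero,
    Fintype.sum_prod_type, Finset.sum_add_distrib, Finset.sum_ite_eq, Finset.mem_univ, if_true,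
    Finset.mul_sum]
  rw [Finset.sum_comm]
  congr 1
  exact Finset.sum_congr rfl fun _ _ => Finset.sum_congr rfl fun _ _ => by ring

theorem Hmat_sum_mul_zero {k : ℕ} (hk : 0 < k) (x : Fin k → ℂ) :
    ∑ j, (Hmat k ⟨0, hk⟩ j : ℂ) * x j = -x ⟨0, hk⟩ := by
  rw [Finset.sum_eq_single ⟨0, hk⟩]
  · simp [Hmat]
  · intro j _ hj
    have : 0 ≠ (j : ℕ) := fun h => hj (Fin.ext h.symm)
    simp [Hmat, this]
  · simp

theorem Hmat_sum_mul_succ {k n : ℕ} (hn : n + 1 < k) (x : Fin k → ℂ) :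
    ∑ j, (Hmat k ⟨n + 1, hn⟩ j : ℂ) * x j = x ⟨n, by omega⟩ - x ⟨n + 1, hn⟩ := by
  rw [Finset.sum_eq_add ⟨n, by omega⟩ ⟨n + 1, hn⟩ (by simp [Fin.ext_iff])]
  · simp [Hmat, sub_eq_add_neg]
  · rintro j - ⟨hj, hj'⟩
    have h1 : n + 1 ≠ (j : ℕ) := fun h => hj' (Fin.ext h.symm)
    have h2 : n ≠ (j : ℕ) := fun h => hj (Fin.ext h.symm)
    simp [Hmat, h1, h2]
  all_goals simp

theorem Gmat_sum_mul {k₁ k₂ : ℕ} (hk₂ : 0 < k₂) (i : Fin k₁) (x : Fin k₂ → ℂ) :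
    ∑ j, (Gmat k₁ k₂ i j : ℂ) * x j = if (i : ℕ) = 0 then x ⟨k₂ - 1, by omega⟩ else 0 := by
  rw [Finset.sum_eq_single ⟨k₂ - 1, by omega⟩]
  · split_ifs <;> simp [Gmat, *]
  · intro j _ hj
    have : (j : ℕ) ≠ k₂ - 1 := fun h => hj (Fin.ext h)
    simp [Gmat, this]
  · simp

theorem chain_eq_geometric {k : ℕ} {z l c : ℂ} (hzl : z + l ≠ 0) {x : Fin k → ℂ}
    (hx : ∀ i : Fin k, z * x i = l * ∑ j, (Hmat k i j : ℂ) * x j + if (i : ℕ) = 0 then c else 0)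
    (i : Fin k) : x i = (l / (z + l)) ^ (i : ℕ) * (c / (z + l)) := by
  obtain ⟨n, hn⟩ := i
  induction n with
  | zero =>
    have h := hx ⟨0, hn⟩
    rw [Hmat_sum_mul_zero] at h
    field_simp
    simp only [if_true] at h
    linear_combination h
  | succ n ih =>
    have h := hx ⟨n + 1, hn⟩
    rw [Hmat_sum_mul_succ] at h
    simp only [Nat.add_one_ne_zero, if_false, add_zero] at h
    have hstep : x ⟨n + 1, hn⟩ = l / (z + l) * x ⟨n, by omega⟩ := by
      field_simp
      linear_combination h
    rw [hstep, ih, pow_succ]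
    ring

noncomputable def chainGain (l : ℂ) (k : ℕ) (z : ℂ) : ℂ :=
  (∑ i ∈ Finset.range k, (l / (z + l)) ^ i) / (z + l)

theorem chain_sum_eq {k : ℕ} {z l c : ℂ} (hzl : z + l ≠ 0) {x : Fin k → ℂ}
    (hx : ∀ i : Fin k, z * x i = l * ∑ j, (Hmat k i j : ℂ) * x j + if (i : ℕ) = 0 then c else 0) :
    ∑ i, x i = chainGain l k z * c := by
  simp only [chain_eq_geometric hzl hx]
  rw [Fin.sum_univ_eq_sum_range (fun i => (l / (z + l)) ^ i * (c / (z + l))), ← Finset.sum_mul,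
    chainGain]
  ring

theorem le_norm_add_ofReal {z : ℂ} (hz : 0 ≤ z.re) (l : ℝ) : l ≤ ‖z + l‖ :=
  calc l ≤ (z + l).re := by simp [hz]
    _ ≤ ‖z + l‖ := Complex.re_le_norm _

theorem norm_ofReal_div_add_le_one {z : ℂ} (hz : 0 ≤ z.re) {l : ℝ} (hl : 0 < l) :
    ‖(l : ℂ) / (z + l)‖ ≤ 1 := by
  rw [norm_div, Complex.norm_real, Real.norm_of_nonneg hl.le]
  exact div_le_one_of_le₀ (le_norm_add_ofReal hz l) (norm_nonneg _)

theorem norm_geom_sum_le {r : ℂ} (hr : ‖r‖ ≤ 1) (k : ℕ) : ‖∑ i ∈ Finset.range k, r ^ i‖ ≤ k :=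
  calc ‖∑ i ∈ Finset.range k, r ^ i‖ ≤ ∑ i ∈ Finset.range k, ‖r‖ ^ i := norm_sum_le_of_le _
        fun i _ => (norm_pow r i).le
    _ ≤ ∑ i ∈ Finset.range k, 1 := Finset.sum_le_sum fun i _ => pow_le_one₀ (norm_nonneg r) hr
    _ = k := by simp

theorem norm_chainGain_le {z : ℂ} (hz : 0 ≤ z.re) {l : ℝ} (hl : 0 < l) (k : ℕ) :
    ‖chainGain l k z‖ ≤ k / l := by
  rw [chainGain, norm_div]
  exact div_le_div₀ k.cast_nonneg (norm_geom_sum_le (norm_ofReal_div_add_le_one hz hl) k) hl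
    (le_norm_add_ofReal hz l)

theorem norm_pow_div_add_le {z : ℂ} (hz : 0 ≤ z.re) {l : ℝ} (hl : 0 < l) (n : ℕ) :
    ‖((l : ℂ) / (z + l)) ^ n / (z + l)‖ ≤ 1 / l := by
  rw [norm_div, norm_pow]
  exact div_le_div₀ zero_le_one (pow_le_one₀ (norm_nonneg _) (norm_ofReal_div_add_le_one hz hl))
    hl (le_norm_add_ofReal hz l)

/-- `transmissionGain … 0 = bIs * pIs * kIs / lIs + bIa * pIa * kIa / lIa`; for general `z` it is
the Laplace transform of the infectiousness produced by one exposure. -/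
noncomputable def transmissionGain (lE lIs lIa bIs bIa pIs pIa : ℝ) (kE kIs kIa : ℕ) (z : ℂ) :
    ℂ :=
  (bIs * pIs * lE * chainGain lIs kIs z + bIa * pIa * lE * chainGain lIa kIa z) *
    ((lE / (z + lE)) ^ (kE - 1) / (z + lE))

section Model

variable {N kE kIs kIa : ℕ} {W : Matrix (Fin N) (Fin N) ℝ} {lE lIs lIa bIs bIa pIs pIa : ℝ}
  {z : ℂ} {v : Fin N × (Fin kE ⊕ (Fin kIs ⊕ Fin kIa)) → ℂ}

variable (W bIs bIa) in
def newInfections (v : Fin N × (Fin kE ⊕ (Fin kIs ⊕ Fin kIa)) → ℂ) (a : Fin N) : ℂ :=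
  ∑ b, (W a b : ℂ) * (bIs * ∑ j, v (b, .inr (.inl j)) + bIa * ∑ j, v (b, .inr (.inr j)))

theorem exposed_chain_eq
    (hv : (W ⊗ₖ deltaMat bIs bIa kE kIs kIa + 1 ⊗ₖ sigmaMat lE lIs lIa pIs pIa kE kIs kIa).map
      (algebraMap ℝ ℂ) *ᵥ v = z • v) (a : Fin N) (i : Fin kE) :
    z * v (a, .inl i) = lE * ∑ j, (Hmat kE i j : ℂ) * v (a, .inl j) +
      if (i : ℕ) = 0 then newInfections W bIs bIa v a else 0 := by
  have h := congrFun hv (a, .inl i)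
  rw [map_kronecker_add_one_kronecker_mulVec_apply] at h
  simp only [deltaMat, of_apply, Sum.elim_inl, Complex.coe_algebraMap, Fintype.sum_sum_type,
    ite_self, Complex.ofReal_zero, zero_mul, Finset.sum_const_zero, Sum.elim_inr, ← Finset.mul_sum,
    zero_add, sigmaMat, fromBlocks_apply₁₁, Matrix.smul_apply, smul_eq_mul, Complex.ofReal_mul,
    mul_assoc, fromBlocks_apply₁₂, Matrix.zero_apply, add_zero, Pi.smul_apply] at h
  rw [← h, newInfections]
  split_ifs
  · simp only [mul_add, Finset.mul_sum, Finset.sum_add_distrib]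
    rw [Finset.sum_comm (γ := Fin kIs), Finset.sum_comm (γ := Fin kIa)]
    ring_nf
  · simp

theorem symptomatic_chain_eq (hkE : 0 < kE)
    (hv : (W ⊗ₖ deltaMat bIs bIa kE kIs kIa + 1 ⊗ₖ sigmaMat lE lIs lIa pIs pIa kE kIs kIa).map
      (algebraMap ℝ ℂ) *ᵥ v = z • v) (a : Fin N) (i : Fin kIs) :
    z * v (a, .inr (.inl i)) = lIs * ∑ j, (Hmat kIs i j : ℂ) * v (a, .inr (.inl j)) +
      if (i : ℕ) = 0 then pIs * lE * v (a, .inl ⟨kE - 1, by omega⟩) else 0 := by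
  have h := congrFun hv (a, .inr (.inl i))
  rw [map_kronecker_add_one_kronecker_mulVec_apply] at h
  simp only [deltaMat, of_apply, Sum.elim_inr, Complex.coe_algebraMap, Complex.ofReal_zero,
    zero_mul, Finset.sum_const_zero, sigmaMat, Fintype.sum_sum_type, fromBlocks_apply₂₁,
    fromRows_apply_inl, Matrix.smul_apply, smul_eq_mul, mul_assoc, Complex.ofReal_mul,
    ← Finset.mul_sum, fromBlocks_apply₂₂, fromBlocks_apply₁₁, fromBlocks_apply₁₂, Matrix.zero_apply,
    add_zero, zero_add, Pi.smul_apply] at h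
  rw [← h, Gmat_sum_mul hkE]
  split_ifs <;> ring

theorem asymptomatic_chain_eq (hkE : 0 < kE)
    (hv : (W ⊗ₖ deltaMat bIs bIa kE kIs kIa + 1 ⊗ₖ sigmaMat lE lIs lIa pIs pIa kE kIs kIa).map
      (algebraMap ℝ ℂ) *ᵥ v = z • v) (a : Fin N) (i : Fin kIa) :
    z * v (a, .inr (.inr i)) = lIa * ∑ j, (Hmat kIa i j : ℂ) * v (a, .inr (.inr j)) +
      if (i : ℕ) = 0 then pIa * lE * v (a, .inl ⟨kE - 1, by omega⟩) else 0 := by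
  have h := congrFun hv (a, .inr (.inr i))
  rw [map_kronecker_add_one_kronecker_mulVec_apply] at h
  simp only [deltaMat, of_apply, Sum.elim_inr, Complex.coe_algebraMap, Complex.ofReal_zero,
    zero_mul, Finset.sum_const_zero, sigmaMat, Fintype.sum_sum_type, fromBlocks_apply₂₁,
    fromRows_apply_inr, Matrix.smul_apply, smul_eq_mul, mul_assoc, Complex.ofReal_mul,
    ← Finset.mul_sum, fromBlocks_apply₂₂, Matrix.zero_apply, zero_add, Pi.smul_apply] at h
  rw [← h, Gmat_sum_mul hkE]
  split_ifs <;> ring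

theorem newInfections_eq (hkE : 0 < kE) (hE : z + lE ≠ 0) (hIs : z + lIs ≠ 0)
    (hIa : z + lIa ≠ 0)
    (hv : (W ⊗ₖ deltaMat bIs bIa kE kIs kIa + 1 ⊗ₖ sigmaMat lE lIs lIa pIs pIa kE kIs kIa).map
      (algebraMap ℝ ℂ) *ᵥ v = z • v) :
    newInfections W bIs bIa v = transmissionGain lE lIs lIa bIs bIa pIs pIa kE kIs kIa z •
      (W.map (algebraMap ℝ ℂ) *ᵥ newInfections W bIs bIa v) := by
  have hlast (b : Fin N) := chain_eq_geometric hE (exposed_chain_eq hv b) ⟨kE - 1, by omega⟩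
  have hsumIs (b : Fin N) := chain_sum_eq hIs (symptomatic_chain_eq hkE hv b)
  have hsumIa (b : Fin N) := chain_sum_eq hIa (asymptomatic_chain_eq hkE hv b)
  ext a
  conv_lhs => rw [newInfections]
  simp only [hsumIs, hsumIa, hlast, Pi.smul_apply, smul_eq_mul, mulVec, dotProduct, map_apply,
    Complex.coe_algebraMap, Finset.mul_sum]
  refine Finset.sum_congr rfl fun b _ => ?_
  rw [transmissionGain]
  ring

theorem eq_zero_of_newInfections_eq_zero (hkE : 0 < kE) (hE : z + lE ≠ 0)
    (hIs : z + lIs ≠ 0) (hIa : z + lIa ≠ 0)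
    (hv : (W ⊗ₖ deltaMat bIs bIa kE kIs kIa + 1 ⊗ₖ sigmaMat lE lIs lIa pIs pIa kE kIs kIa).map
      (algebraMap ℝ ℂ) *ᵥ v = z • v) (h0 : newInfections W bIs bIa v = 0) : v = 0 := by
  have hexp (a : Fin N) (i : Fin kE) : v (a, .inl i) = 0 := by
    rw [chain_eq_geometric hE (exposed_chain_eq hv a) i, h0]
    simp
  ext ⟨a, i | i | i⟩
  · exact hexp a i
  · rw [chain_eq_geometric hIs (symptomatic_chain_eq hkE hv a) i, hexp]
    simp
  · rw [chain_eq_geometric hIa (asymptomatic_chain_eq hkE hv a) i, hexp]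
    simp

theorem norm_transmissionGain_le (hz : 0 ≤ z.re) (hlE : 0 < lE) (hlIs : 0 < lIs)
    (hlIa : 0 < lIa) (hbIs : 0 ≤ bIs) (hbIa : 0 ≤ bIa) (hpIs : 0 ≤ pIs) (hpIa : 0 ≤ pIa) :
    ‖transmissionGain lE lIs lIa bIs bIa pIs pIa kE kIs kIa z‖
      ≤ bIs * pIs * kIs / lIs + bIa * pIa * kIa / lIa := by
  have hIs : ‖(bIs * pIs * lE : ℂ) * chainGain lIs kIs z‖ ≤ bIs * pIs * lE * (kIs / lIs) := by
    rw [norm_mul]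
    gcongr
    · exact_mod_cast (Complex.norm_of_nonneg (by positivity)).le
    · exact norm_chainGain_le hz hlIs kIs
  have hIa : ‖(bIa * pIa * lE : ℂ) * chainGain lIa kIa z‖ ≤ bIa * pIa * lE * (kIa / lIa) := by
    rw [norm_mul]
    gcongr
    · exact_mod_cast (Complex.norm_of_nonneg (by positivity)).le
    · exact norm_chainGain_le hz hlIa kIa
  calc ‖transmissionGain lE lIs lIa bIs bIa pIs pIa kE kIs kIa z‖
      ≤ (bIs * pIs * lE * (kIs / lIs) + bIa * pIa * lE * (kIa / lIa)) * (1 / lE) := by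
        rw [transmissionGain, norm_mul]
        gcongr
        · exact (norm_add_le _ _).trans (add_le_add hIs hIa)
        · exact norm_pow_div_add_le hz hlE _
    _ = bIs * pIs * kIs / lIs + bIa * pIa * kIa / lIa := by
        field_simp

end Model

theorem stmt0_general {N : ℕ} (W : Matrix (Fin N) (Fin N) ℝ)
    (lE lIs lIa : ℝ) (hlE : 0 < lE) (hlIs : 0 < lIs) (hlIa : 0 < lIa)
    (bIs bIa : ℝ) (hbIs : 0 ≤ bIs) (hbIa : 0 ≤ bIa)
    (pIs pIa : ℝ) (hpIs : pIs ∈ Set.Icc (0 : ℝ) 1) (hpIa : pIa ∈ Set.Icc (0 : ℝ) 1)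
    (kE kIs kIa : ℕ) (hkE : 1 ≤ kE)
    (hthr : (bIs * pIs * (kIs : ℝ) / lIs + bIa * pIa * (kIa : ℝ) / lIa) * specRadius W < 1) :
    ∀ z ∈ eigSet (W ⊗ₖ deltaMat bIs bIa kE kIs kIa +
        (1 : Matrix (Fin N) (Fin N) ℝ) ⊗ₖ sigmaMat lE lIs lIa pIs pIa kE kIs kIa),
      z.re < 0 := by
  intro z hz
  by_contra! hre
  obtain ⟨v, hv0, hv⟩ := mem_eigSet_iff.1 hz
  have hne {l : ℝ} (hl : 0 < l) : z + l ≠ 0 :=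
    norm_pos_iff.1 (hl.trans_le (le_norm_add_ofReal hre l))
  have hc0 : newInfections W bIs bIa v ≠ 0 := fun h =>
    hv0 (eq_zero_of_newInfections_eq_zero hkE (hne hlE) (hne hlIs) (hne hlIa) hv h)
  have hgρ := one_le_norm_mul_specRadius hc0
    (newInfections_eq hkE (hne hlE) (hne hlIs) (hne hlIa) hv)
  have hg : ‖transmissionGain lE lIs lIa bIs bIa pIs pIa kE kIs kIa z‖ ≤ _ :=
    norm_transmissionGain_le hre hlE hlIs hlIa hbIs hbIa hpIs.1 hpIa.1
  have hρ : 0 < specRadius W := pos_of_mul_pos_right (one_pos.trans_le hgρ) (norm_nonneg _)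
  exact hthr.not_ge (hgρ.trans (mul_le_mul_of_nonneg_right hg hρ.le))

/-- Under the epidemic-threshold condition, every complex eigenvalue of
`Δ + Σ` has strictly negative real part, i.e. `s(Δ + Σ) < 0`. -/
theorem stmt0 {N : ℕ} (W : Matrix (Fin N) (Fin N) ℝ)
    (hWnonneg : ∀ i j, 0 ≤ W i j)
    (hWirr : ∀ i j, ∃ n : ℕ, 1 ≤ n ∧ 0 < (W ^ n) i j)
    (lE lIs lIa : ℝ) (hlE : 0 < lE) (hlIs : 0 < lIs) (hlIa : 0 < lIa)
    (bIs bIa : ℝ) (hbIs : 0 ≤ bIs) (hbIa : 0 ≤ bIa) (hbpos : 0 < bIs + bIa)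
    (pIs pIa : ℝ) (hpIs : pIs ∈ Set.Icc (0 : ℝ) 1) (hpIa : pIa ∈ Set.Icc (0 : ℝ) 1)
    (kE kIs kIa : ℕ) (hkE : 1 ≤ kE) (hkIs : 1 ≤ kIs) (hkIa : 1 ≤ kIa)
    (hthr : (bIs * pIs * (kIs : ℝ) / lIs + bIa * pIa * (kIa : ℝ) / lIa) * specRadius W < 1) :
    ∀ z ∈ eigSet (W ⊗ₖ deltaMat bIs bIa kE kIs kIa +
        (1 : Matrix (Fin N) (Fin N) ℝ) ⊗ₖ sigmaMat lE lIs lIa pIs pIa kE kIs kIa),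
      z.re < 0 :=
  stmt0_general W lE lIs lIa hlE hlIs hlIa bIs bIa hbIs hbIa pIs pIa hpIs hpIa kE kIs kIa hkE hthr
end

section
/- Let W be an N×N entrywise-nonnegative irreducible real matrix, let λ_E, λ_Is, λ_Ia > 0, β_Is, β_Ia ≥ 0, p_Is, p_Ia ∈ [0,1], and integer shape parameters k_E, k_Is, k_Ia ≥ 1. With Δ = W ⊗ δ and Σ = I_N ⊗ σ as defined, Σ is invertible and ρ(−Δ·Σ⁻¹) = (β_Is·p_Is·k_Is/λ_Is + β_Ia·p_Ia·k_Ia/λ_Ia)·ρ(W). -/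
open Matrix Polynomial Kronecker

/-! `δ = e₁ u` has rank one, so `-ΔΣ⁻¹ = (W ⊗ e₁)(I ⊗ -uσ⁻¹)`, and a product `PQ` has the same
nonzero eigenvalues as `QP = W ⊗ (-uσ⁻¹e₁) = c W` with `c = -uσ⁻¹e₁`. Since the rows of `H_k`
sum to `(-1, 0, …, 0)`, the vector `σ⁻¹e₁` is constant on each block, equal to
`(-1/λ_E, -p_Is/λ_Is, -p_Ia/λ_Ia)`, which gives `c = β_Is p_Is k_Is/λ_Is + β_Ia p_Ia k_Ia/λ_Ia ≥ 0`.
The spectral radius only sees nonzero eigenvalues, hence `ρ(-ΔΣ⁻¹) = ρ(c W) = c ρ(W)`. -/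

lemma Real.sSup_insert_zero_of_nonneg {S : Set ℝ} (hS : ∀ x ∈ S, 0 ≤ x) :
    sSup (insert 0 S) = sSup S := by
  rcases S.eq_empty_or_nonempty with rfl | hne
  · simp
  by_cases hb : BddAbove S
  · rw [csSup_insert hb hne, sup_eq_right.mpr (Real.sSup_nonneg hS)]
  · rw [Real.sSup_of_not_bddAbove hb, Real.sSup_of_not_bddAbove (by rwa [bddAbove_insert])]

section Spectrum

open scoped Pointwise

variable {m n : Type*} [Fintype m] [DecidableEq m] [Fintype n] [DecidableEq n]

lemma mem_eigSet_iff_det (M : Matrix n n ℝ) (z : ℂ) :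
    z ∈ eigSet M ↔ (scalar n z - M.map (algebraMap ℝ ℂ)).det = 0 := by
  rw [eigSet, Set.mem_ofPred_eq, IsRoot.def, eval_charpoly]

lemma eigSet_reindex (e : m ≃ n) (M : Matrix m m ℝ) : eigSet (reindex e e M) = eigSet M := by
  rw [eigSet, eigSet, reindex_apply, ← submatrix_map, ← reindex_apply, charpoly_reindex]

lemma eigSet_mul_comm_diff_zero (P : Matrix m n ℝ) (Q : Matrix n m ℝ) :
    eigSet (P * Q) \ {0} = eigSet (Q * P) \ {0} := by
  ext z
  simp only [Set.mem_sdiff, Set.mem_singleton_iff, eigSet, Set.mem_ofPred_eq, Matrix.map_mul,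
    IsRoot.def]
  refine and_congr_left fun hz => ?_
  have h := congrArg (eval z)
    (charpoly_mul_comm' (P.map (algebraMap ℝ ℂ)) (Q.map (algebraMap ℝ ℂ)))
  simp only [eval_mul, eval_pow, eval_X] at h
  constructor <;> intro h0 <;> simp_all

lemma eigSet_smul {c : ℝ} (hc : c ≠ 0) (M : Matrix n n ℝ) :
    eigSet (c • M) = (c : ℂ) • eigSet M := by
  ext z
  have hc' : (c : ℂ) ≠ 0 := by exact_mod_cast hc
  have hfactor : scalar n z - (c • M).map (algebraMap ℝ ℂ)
      = (c : ℂ) • (scalar n ((c : ℂ)⁻¹ • z) - M.map (algebraMap ℝ ℂ)) := by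
    ext i j
    rcases eq_or_ne i j with rfl | hij <;> simp [*, mul_sub]
  rw [Set.mem_smul_set_iff_inv_smul_mem₀ hc', mem_eigSet_iff_det, mem_eigSet_iff_det, hfactor,
    det_smul, mul_eq_zero, or_iff_right (pow_ne_zero _ hc')]

lemma eigSet_zero_subset : eigSet (0 : Matrix n n ℝ) ⊆ {0} := fun z hz => by
  have : z = 0 ∧ Fintype.card n ≠ 0 := by simpa [eigSet] using hz
  exact this.1

lemma specRadius_eq_sSup_insert_zero (M : Matrix n n ℝ) :
    specRadius M = sSup ((fun z : ℂ => ‖z‖) '' insert 0 (eigSet M \ {0})) := by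
  rw [Set.insert_sdiff_singleton, Set.image_insert_eq, norm_zero,
    Real.sSup_insert_zero_of_nonneg (by rintro _ ⟨z, -, rfl⟩; exact norm_nonneg z), specRadius]

lemma specRadius_eq_of_eigSet_diff_zero_eq {A : Matrix m m ℝ} {B : Matrix n n ℝ}
    (h : eigSet A \ {0} = eigSet B \ {0}) : specRadius A = specRadius B := by
  rw [specRadius_eq_sSup_insert_zero, specRadius_eq_sSup_insert_zero, h]

lemma specRadius_reindex (e : m ≃ n) (M : Matrix m m ℝ) :
    specRadius (reindex e e M) = specRadius M := by
  rw [specRadius, eigSet_reindex, specRadius]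

lemma specRadius_smul {c : ℝ} (hc : 0 ≤ c) (M : Matrix n n ℝ) :
    specRadius (c • M) = c * specRadius M := by
  rcases hc.eq_or_lt with rfl | hc
  · rw [zero_smul, zero_mul, specRadius_eq_sSup_insert_zero,
      Set.sdiff_eq_empty.mpr eigSet_zero_subset]
    simp
  · have : (fun z : ℂ => ‖z‖) '' ((c : ℂ) • eigSet M) = c • ((fun z : ℂ => ‖z‖) '' eigSet M) := by
      rw [← Set.image_smul, ← Set.image_smul, Set.image_image, Set.image_image]
      refine Set.image_congr fun z _ => ?_
      simp [hc.le]
    rw [specRadius, eigSet_smul hc.ne', this, Real.sSup_smul_of_nonneg hc.le, smul_eq_mul,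
      specRadius]

end Spectrum

lemma sum_Hmat_row {k : ℕ} (i : Fin k) :
    ∑ j, Hmat k i j = if (i : ℕ) = 0 then -1 else 0 := by
  rcases i with ⟨_ | i, hi⟩
  · rw [Fintype.sum_eq_single ⟨0, hi⟩ fun j hj => ?_]
    · simp [Hmat]
    · simp [Hmat, Fin.ext_iff, eq_comm (a := 0)] at hj ⊢
      omega
  · rw [Fintype.sum_eq_add ⟨i + 1, hi⟩ ⟨i, by omega⟩ (by simp [Fin.ext_iff]) fun j hj => ?_]
    · simp [Hmat]
    · simp only [ne_eq, Fin.ext_iff] at hj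
      simp only [Hmat, of_apply]
      rw [if_neg (by omega), if_neg (by omega)]

lemma sum_Gmat_row {k₁ k₂ : ℕ} (hk₂ : 1 ≤ k₂) (i : Fin k₁) :
    ∑ j, Gmat k₁ k₂ i j = if (i : ℕ) = 0 then 1 else 0 := by
  rw [Fintype.sum_eq_single ⟨k₂ - 1, by omega⟩ fun j hj => ?_]
  · simp [Gmat]
  · simp [Gmat, Fin.ext_iff] at hj ⊢
    omega

lemma det_Hmat (k : ℕ) : (Hmat k).det = (-1) ^ k := by
  have h : (Hmat k).IsLowerTriangular := fun i j (hij : i < j) => by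
    simp only [Hmat, of_apply]
    rw [if_neg (by omega), if_neg (by omega)]
  rw [det_of_isLowerTriangular _ h]
  simp [Hmat]

section SigmaDelta

variable (lE lIs lIa pIs pIa bIs bIa : ℝ) (kE kIs kIa : ℕ)

lemma det_sigmaMat :
    (sigmaMat lE lIs lIa pIs pIa kE kIs kIa).det
      = (-lE) ^ kE * ((-lIs) ^ kIs * (-lIa) ^ kIa) := by
  simp only [sigmaMat, det_fromBlocks_zero₁₂, det_smul, det_Hmat, Fintype.card_fin]
  ring

def firstBasisCol : Matrix (Fin kE ⊕ (Fin kIs ⊕ Fin kIa)) Unit ℝ :=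
  of fun i _ => Sum.elim (fun i : Fin kE => if (i : ℕ) = 0 then 1 else 0) 0 i

def deltaFirstRow : Matrix Unit (Fin kE ⊕ (Fin kIs ⊕ Fin kIa)) ℝ :=
  of fun _ => Sum.elim (fun _ => 0) (Sum.elim (fun _ => bIs) fun _ => bIa)

noncomputable def sigmaInvFirstCol : Matrix (Fin kE ⊕ (Fin kIs ⊕ Fin kIa)) Unit ℝ :=
  of fun i _ =>
    Sum.elim (fun _ => -lE⁻¹) (Sum.elim (fun _ => -(pIs / lIs)) fun _ => -(pIa / lIa)) i

lemma deltaMat_eq_mul :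
    deltaMat bIs bIa kE kIs kIa = firstBasisCol kE kIs kIa * deltaFirstRow bIs bIa kE kIs kIa := by
  ext (i | i) j <;> simp [deltaMat, firstBasisCol, deltaFirstRow, mul_apply]

variable {lE lIs lIa kE} in
lemma sigmaMat_mul_sigmaInvFirstCol (hlE : lE ≠ 0) (hlIs : lIs ≠ 0) (hlIa : lIa ≠ 0)
    (hkE : 1 ≤ kE) :
    sigmaMat lE lIs lIa pIs pIa kE kIs kIa * sigmaInvFirstCol lE lIs lIa pIs pIa kE kIs kIa
      = firstBasisCol kE kIs kIa := by
  ext (i | i | i) j <;>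
  simp [sigmaMat, sigmaInvFirstCol, firstBasisCol, mul_apply, Fintype.sum_sum_type,
    ← Finset.sum_mul, ← Finset.mul_sum, sum_Hmat_row, sum_Gmat_row hkE] <;>
  split_ifs <;> field_simp <;> ring

lemma deltaFirstRow_mul_sigmaInvFirstCol :
    deltaFirstRow bIs bIa kE kIs kIa * sigmaInvFirstCol lE lIs lIa pIs pIa kE kIs kIa
      = -((bIs * pIs * kIs / lIs + bIa * pIa * kIa / lIa) • 1) := by
  ext ⟨⟩ ⟨⟩
  simp [deltaFirstRow, sigmaInvFirstCol, mul_apply, Fintype.sum_sum_type]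
  ring

end SigmaDelta

section Kronecker

variable {R : Type*} [CommRing R] {m n ι : Type*}

lemma kronecker_smul_one_unit (A : Matrix m n R) (a : R) :
    A ⊗ₖ (a • 1 : Matrix Unit Unit R)
      = reindex (Equiv.prodPUnit m).symm (Equiv.prodPUnit n).symm (a • A) := by
  ext ⟨i, ⟨⟩⟩ ⟨j, ⟨⟩⟩
  simp [mul_comm]

lemma neg_kronecker_mul_one_kronecker_inv [Fintype m] [DecidableEq m] [Fintype ι]
    [DecidableEq ι] (W : Matrix m m R) (E : Matrix ι Unit R) (U : Matrix Unit ι R)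
    (S : Matrix ι ι R) :
    -(W ⊗ₖ (E * U) * ((1 : Matrix m m R) ⊗ₖ S)⁻¹)
      = (W ⊗ₖ E) * ((1 : Matrix m m R) ⊗ₖ (-(U * S⁻¹))) := by
  rw [inv_kronecker, inv_one, ← mul_kronecker_mul, ← mul_kronecker_mul, Matrix.mul_one,
    Matrix.mul_neg, Matrix.mul_assoc]
  ext
  simp

end Kronecker

theorem stmt2_general {N : ℕ} (W : Matrix (Fin N) (Fin N) ℝ)
    (lE lIs lIa : ℝ) (hlE : 0 < lE) (hlIs : 0 < lIs) (hlIa : 0 < lIa)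
    (bIs bIa : ℝ) (hbIs : 0 ≤ bIs) (hbIa : 0 ≤ bIa)
    (pIs pIa : ℝ) (hpIs : pIs ∈ Set.Icc (0 : ℝ) 1) (hpIa : pIa ∈ Set.Icc (0 : ℝ) 1)
    (kE kIs kIa : ℕ) (hkE : 1 ≤ kE) :
    IsUnit ((1 : Matrix (Fin N) (Fin N) ℝ) ⊗ₖ sigmaMat lE lIs lIa pIs pIa kE kIs kIa).det ∧
    specRadius (-(W ⊗ₖ deltaMat bIs bIa kE kIs kIa *
        ((1 : Matrix (Fin N) (Fin N) ℝ) ⊗ₖ sigmaMat lE lIs lIa pIs pIa kE kIs kIa)⁻¹)) =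
      (bIs * pIs * (kIs : ℝ) / lIs + bIa * pIa * (kIa : ℝ) / lIa) * specRadius W := by
  set σ := sigmaMat lE lIs lIa pIs pIa kE kIs kIa
  have hσ : IsUnit σ.det := by
    rw [det_sigmaMat, isUnit_iff_ne_zero]
    simp [hlE.ne', hlIs.ne', hlIa.ne']
  refine ⟨by simpa [det_kronecker] using hσ.pow _, ?_⟩
  have hσX : σ⁻¹ * firstBasisCol kE kIs kIa = sigmaInvFirstCol lE lIs lIa pIs pIa kE kIs kIa := by
    rw [← sigmaMat_mul_sigmaInvFirstCol pIs pIa kIs kIa hlE.ne' hlIs.ne' hlIa.ne' hkE,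
      ← Matrix.mul_assoc, nonsing_inv_mul _ hσ, Matrix.one_mul]
  have hc : 0 ≤ bIs * pIs * (kIs : ℝ) / lIs + bIa * pIa * (kIa : ℝ) / lIa := by
    have := hpIs.1
    have := hpIa.1
    positivity
  rw [deltaMat_eq_mul, neg_kronecker_mul_one_kronecker_inv,
    specRadius_eq_of_eigSet_diff_zero_eq (eigSet_mul_comm_diff_zero _ _),
    ← mul_kronecker_mul, Matrix.one_mul, Matrix.neg_mul, Matrix.mul_assoc, hσX,
    deltaFirstRow_mul_sigmaInvFirstCol, neg_neg, kronecker_smul_one_unit, specRadius_reindex,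
    specRadius_smul hc]

/-- `Σ = I_N ⊗ σ` is invertible and
`ρ(-Δ·Σ⁻¹) = (β_Is·p_Is·k_Is/λ_Is + β_Ia·p_Ia·k_Ia/λ_Ia)·ρ(W)`. -/
theorem stmt2 {N : ℕ} (W : Matrix (Fin N) (Fin N) ℝ)
    (hWnonneg : ∀ i j, 0 ≤ W i j)
    (hWirr : ∀ i j, ∃ n : ℕ, 1 ≤ n ∧ 0 < (W ^ n) i j)
    (lE lIs lIa : ℝ) (hlE : 0 < lE) (hlIs : 0 < lIs) (hlIa : 0 < lIa)
    (bIs bIa : ℝ) (hbIs : 0 ≤ bIs) (hbIa : 0 ≤ bIa)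
    (pIs pIa : ℝ) (hpIs : pIs ∈ Set.Icc (0 : ℝ) 1) (hpIa : pIa ∈ Set.Icc (0 : ℝ) 1)
    (kE kIs kIa : ℕ) (hkE : 1 ≤ kE) (hkIs : 1 ≤ kIs) (hkIa : 1 ≤ kIa) :
    IsUnit ((1 : Matrix (Fin N) (Fin N) ℝ) ⊗ₖ sigmaMat lE lIs lIa pIs pIa kE kIs kIa).det ∧
    specRadius (-(W ⊗ₖ deltaMat bIs bIa kE kIs kIa *
        ((1 : Matrix (Fin N) (Fin N) ℝ) ⊗ₖ sigmaMat lE lIs lIa pIs pIa kE kIs kIa)⁻¹)) =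
      (bIs * pIs * (kIs : ℝ) / lIs + bIa * pIa * (kIa : ℝ) / lIa) * specRadius W :=
  stmt2_general W lE lIs lIa hlE hlIs hlIa bIs bIa hbIs hbIa pIs pIa hpIs hpIa kE kIs kIa hkE
end

section
/- Let λ_E, λ_Is, λ_Ia > 0, p_Is, p_Ia ∈ [0,1], and integer shape parameters k_E, k_Is, k_Ia ≥ 1, and let σ be the associated block matrix. Then σ is invertible and −σ⁻¹ equals the block matrix [[λ_E⁻¹·F_{k_E}, 0, 0], [p_Is·λ_Is⁻¹·J_{k_Is,k_E}, λ_Is⁻¹·F_{k_Is}, 0], [p_Ia·λ_Ia⁻¹·J_{k_Ia,k_E}, 0, λ_Ia⁻¹·F_{k_Ia}]]; in particular every entry of −σ⁻¹ is nonnegative. -/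
open Matrix Polynomial Kronecker

/-! Left multiplication by `H_k` takes first differences of rows, `(H_k M)_i = M_{i-1} - M_i`
with `M_{-1} = 0`, so `H_k F_k = -1`. `G F` has an all-ones first row and zeros elsewhere, and
`H J` is its negative, so with the scalars `(p λ_E) λ_E⁻¹ = λ_I (p λ_I⁻¹) = p` the lower-left
block of `σ N` vanishes, `N` being the claimed matrix. Thus `σ N = -1`, so `σ` is invertible with
`-σ⁻¹ = N`, whose entries are visibly nonnegative. -/

lemma Hmat_apply (k : ℕ) (i l : Fin k) :
    Hmat k i l = -(if l = i then 1 else 0) + if (i : ℕ) = l + 1 then 1 else 0 := by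
  by_cases h : l = i
  · subst h; simp [Hmat]
  · have : (i : ℕ) ≠ l := fun h' => h (Fin.ext h'.symm)
    simp [Hmat, h, this]

lemma Hmat_mul_apply {n : Type*} (k : ℕ) (M : Matrix (Fin k) n ℝ) (i : Fin k) (j : n) :
    (Hmat k * M) i j = -M i j + ∑ l : Fin k, if (i : ℕ) = l + 1 then M l j else 0 := by
  simp [mul_apply, Hmat_apply, add_mul, Finset.sum_add_distrib, ite_mul]

lemma Hmat_mul_apply_of_val_eq_zero {n : Type*} (k : ℕ) (M : Matrix (Fin k) n ℝ) {i : Fin k}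
    (hi : (i : ℕ) = 0) (j : n) : (Hmat k * M) i j = -M i j := by
  simp [Hmat_mul_apply, hi]

lemma Hmat_mul_apply_of_val_eq_succ {n : Type*} (k : ℕ) (M : Matrix (Fin k) n ℝ) {i l : Fin k}
    (hil : (i : ℕ) = l + 1) (j : n) : (Hmat k * M) i j = M l j - M i j := by
  have hcond : ∀ l' : Fin k, (i : ℕ) = l' + 1 ↔ l' = l := fun l' => by rw [Fin.ext_iff]; omega
  simp only [Hmat_mul_apply, hcond, Finset.sum_ite_eq', Finset.mem_univ, if_true]
  ring

lemma Hmat_mul_Fmat (k : ℕ) : Hmat k * Fmat k = -1 := by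
  ext ⟨_ | i, hi⟩ j
  · rw [Hmat_mul_apply_of_val_eq_zero _ _ rfl]
    simp only [Fmat, of_apply, Matrix.neg_apply, one_apply, Fin.ext_iff]
    split_ifs <;> norm_num <;> omega
  · rw [Hmat_mul_apply_of_val_eq_succ (l := ⟨i, by omega⟩) _ _ rfl]
    simp only [Fmat, of_apply, Matrix.neg_apply, one_apply, Fin.ext_iff]
    split_ifs <;> norm_num <;> omega

lemma Gmat_mul_apply {n : Type*} (k₁ k₂ : ℕ) (M : Matrix (Fin k₂) n ℝ) (i : Fin k₁)
    {l : Fin k₂} (hl : (l : ℕ) = k₂ - 1) (j : n) :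
    (Gmat k₁ k₂ * M) i j = if (i : ℕ) = 0 then M l j else 0 := by
  simp [mul_apply, Gmat, ite_mul, ← hl, ← Fin.ext_iff, ite_and]

lemma Gmat_mul_Fmat_add_Hmat_mul_Jmat (k₁ k₂ : ℕ) :
    Gmat k₁ k₂ * Fmat k₂ + Hmat k₁ * Jmat k₁ k₂ = 0 := by
  ext ⟨_ | i, hi⟩ j
  · rw [Matrix.add_apply, Gmat_mul_apply (l := ⟨k₂ - 1, Nat.sub_one_lt_of_lt j.isLt⟩) _ _ _ _ rfl,
      Hmat_mul_apply_of_val_eq_zero _ _ rfl]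
    simp only [Fmat, Jmat, of_apply, if_pos (Nat.le_sub_one_of_lt j.isLt)]
    norm_num
  · rw [Matrix.add_apply, Gmat_mul_apply (l := ⟨k₂ - 1, Nat.sub_one_lt_of_lt j.isLt⟩) _ _ _ _ rfl,
      Hmat_mul_apply_of_val_eq_succ (l := ⟨i, by omega⟩) _ _ rfl]
    simp [Jmat]

lemma smul_Hmat_mul_inv_smul_Fmat (k : ℕ) {a : ℝ} (ha : a ≠ 0) :
    (a • Hmat k) * (a⁻¹ • Fmat k) = -1 := by
  rw [smul_mul_smul_comm, mul_inv_cancel₀ ha, one_smul, Hmat_mul_Fmat]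

lemma smul_Gmat_mul_add_smul_Hmat_mul (k₁ k₂ : ℕ) (p : ℝ) {a b : ℝ} (ha : a ≠ 0) (hb : b ≠ 0) :
    ((p * a) • Gmat k₁ k₂) * (a⁻¹ • Fmat k₂) + (b • Hmat k₁) * ((p * b⁻¹) • Jmat k₁ k₂) = 0 := by
  calc _ = p • (Gmat k₁ k₂ * Fmat k₂ + Hmat k₁ * Jmat k₁ k₂) := by
        simp only [Matrix.smul_mul, Matrix.mul_smul, smul_smul, smul_add]
        congr 2 <;> field_simp
    _ = 0 := by rw [Gmat_mul_Fmat_add_Hmat_mul_Jmat, smul_zero]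

lemma Matrix.fromRows_add {R m₁ m₂ n : Type*} [Add R] (A₁ B₁ : Matrix m₁ n R)
    (A₂ B₂ : Matrix m₂ n R) : fromRows A₁ A₂ + fromRows B₁ B₂ = fromRows (A₁ + B₁) (A₂ + B₂) := by
  ext (_ | _) _ <;> simp

noncomputable def negSigmaInvMat (lE lIs lIa pIs pIa : ℝ) (kE kIs kIa : ℕ) :
    Matrix (Fin kE ⊕ (Fin kIs ⊕ Fin kIa)) (Fin kE ⊕ (Fin kIs ⊕ Fin kIa)) ℝ :=
  Matrix.fromBlocks (lE⁻¹ • Fmat kE) 0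
    (Matrix.fromRows ((pIs * lIs⁻¹) • Jmat kIs kE) ((pIa * lIa⁻¹) • Jmat kIa kE))
    (Matrix.fromBlocks (lIs⁻¹ • Fmat kIs) 0 0 (lIa⁻¹ • Fmat kIa))

lemma sigmaMat_mul_negSigmaInvMat {lE lIs lIa : ℝ} (hlE : lE ≠ 0) (hlIs : lIs ≠ 0)
    (hlIa : lIa ≠ 0) (pIs pIa : ℝ) (kE kIs kIa : ℕ) :
    sigmaMat lE lIs lIa pIs pIa kE kIs kIa * negSigmaInvMat lE lIs lIa pIs pIa kE kIs kIa = -1 := by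
  rw [sigmaMat, negSigmaInvMat, fromBlocks_multiply, fromRows_mul, fromBlocks_mul_fromRows,
    fromRows_add, fromBlocks_multiply]
  simp only [smul_Hmat_mul_inv_smul_Fmat _ hlE, smul_Hmat_mul_inv_smul_Fmat _ hlIs,
    smul_Hmat_mul_inv_smul_Fmat _ hlIa, smul_Gmat_mul_add_smul_Hmat_mul _ _ _ hlE hlIs,
    smul_Gmat_mul_add_smul_Hmat_mul _ _ _ hlE hlIa, Matrix.zero_mul, Matrix.mul_zero,
    add_zero, zero_add, fromRows_zero]
  rw [← fromBlocks_one, ← fromBlocks_one, fromBlocks_neg, fromBlocks_neg]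
  simp only [neg_zero]

lemma negSigmaInvMat_nonneg {lE lIs lIa pIs pIa : ℝ} (hlE : 0 ≤ lE) (hlIs : 0 ≤ lIs)
    (hlIa : 0 ≤ lIa) (hpIs : 0 ≤ pIs) (hpIa : 0 ≤ pIa) (kE kIs kIa : ℕ) :
    ∀ i j, 0 ≤ negSigmaInvMat lE lIs lIa pIs pIa kE kIs kIa i j := by
  have hF : ∀ k (i j : Fin k), 0 ≤ Fmat k i j := fun _ _ _ => by
    simp only [Fmat, of_apply]; split_ifs <;> norm_num
  rintro (i | i | i) (j | j | j) <;>
    simp [negSigmaInvMat, Jmat] <;> first | positivity | exact mul_nonneg (by positivity) (hF _ _ _)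

theorem stmt4_general (lE lIs lIa : ℝ) (hlE : 0 < lE) (hlIs : 0 < lIs) (hlIa : 0 < lIa)
    (pIs pIa : ℝ) (hpIs : pIs ∈ Set.Icc (0 : ℝ) 1) (hpIa : pIa ∈ Set.Icc (0 : ℝ) 1)
    (kE kIs kIa : ℕ) :
    IsUnit (sigmaMat lE lIs lIa pIs pIa kE kIs kIa).det ∧
    -(sigmaMat lE lIs lIa pIs pIa kE kIs kIa)⁻¹ =
      Matrix.fromBlocks (lE⁻¹ • Fmat kE) 0
        (Matrix.fromRows ((pIs * lIs⁻¹) • Jmat kIs kE) ((pIa * lIa⁻¹) • Jmat kIa kE))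
        (Matrix.fromBlocks (lIs⁻¹ • Fmat kIs) 0 0 (lIa⁻¹ • Fmat kIa)) ∧
    ∀ i j, 0 ≤ (-(sigmaMat lE lIs lIa pIs pIa kE kIs kIa)⁻¹) i j := by
  have hright : sigmaMat lE lIs lIa pIs pIa kE kIs kIa *
      -negSigmaInvMat lE lIs lIa pIs pIa kE kIs kIa = 1 := by
    rw [Matrix.mul_neg, sigmaMat_mul_negSigmaInvMat hlE.ne' hlIs.ne' hlIa.ne', neg_neg]
  have hinv := inv_eq_right_inv hright
  refine ⟨isUnit_det_of_right_inverse hright, by rw [hinv, neg_neg, negSigmaInvMat], ?_⟩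
  rw [hinv, neg_neg]
  exact negSigmaInvMat_nonneg hlE.le hlIs.le hlIa.le hpIs.1 hpIa.1 kE kIs kIa

/-- σ is invertible and `-σ⁻¹` equals the block matrix
`[[λ_E⁻¹·F_{k_E}, 0, 0], [p_Is·λ_Is⁻¹·J_{k_Is,k_E}, λ_Is⁻¹·F_{k_Is}, 0],
  [p_Ia·λ_Ia⁻¹·J_{k_Ia,k_E}, 0, λ_Ia⁻¹·F_{k_Ia}]]`; in particular every entry of
`-σ⁻¹` is nonnegative. -/
theorem stmt4 (lE lIs lIa : ℝ) (hlE : 0 < lE) (hlIs : 0 < lIs) (hlIa : 0 < lIa)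
    (pIs pIa : ℝ) (hpIs : pIs ∈ Set.Icc (0 : ℝ) 1) (hpIa : pIa ∈ Set.Icc (0 : ℝ) 1)
    (kE kIs kIa : ℕ) (hkE : 1 ≤ kE) (hkIs : 1 ≤ kIs) (hkIa : 1 ≤ kIa) :
    IsUnit (sigmaMat lE lIs lIa pIs pIa kE kIs kIa).det ∧
    -(sigmaMat lE lIs lIa pIs pIa kE kIs kIa)⁻¹ =
      Matrix.fromBlocks (lE⁻¹ • Fmat kE) 0
        (Matrix.fromRows ((pIs * lIs⁻¹) • Jmat kIs kE) ((pIa * lIa⁻¹) • Jmat kIa kE))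
        (Matrix.fromBlocks (lIs⁻¹ • Fmat kIs) 0 0 (lIa⁻¹ • Fmat kIa)) ∧
    ∀ i j, 0 ≤ (-(sigmaMat lE lIs lIa pIs pIa kE kIs kIa)⁻¹) i j :=
  stmt4_general lE lIs lIa hlE hlIs hlIa pIs pIa hpIs hpIa kE kIs kIa
end

section
/- Let Y be an n×n real matrix with nonnegative off-diagonal entries (Y_{ij} ≥ 0 for all i ≠ j). Then s(Y) < 0 (every complex eigenvalue of Y has strictly negative real part) if and only if Y is invertible and −Y⁻¹ is entrywise nonnegative. -/
open Matrix Polynomial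

/-!
(⇐) The vector `d = -Y⁻¹ 1` is positive with `Y d = -1`. Conjugating by `diag d` turns `Y` into
a Metzler matrix with negative row sums, whose Gershgorin discs lie in the open left half-plane.

(⇒) No `t ≥ 0` is an eigenvalue, so the resolvent `R t = (t - Y)⁻¹` is defined and continuous
on `[0, ∞)`. A minimum principle for Metzler matrices with negative row sums gives `R t ≥ 0` for
`t` above every row sum of `Y`, and, through the resolvent identity
`((t - s) R t - 1) R s = -R t`, propagates `R ≥ 0` from `t` down to some `[t - δ, t]`.
Continuous induction then reaches `R 0 = -Y⁻¹`.
-/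

open Finset

namespace Matrix

variable {n : Type*} [Fintype n]

def IsMetzler (Y : Matrix n n ℝ) : Prop := ∀ i j, i ≠ j → 0 ≤ Y i j

namespace IsMetzler

variable {Y : Matrix n n ℝ}

theorem row_sum_mul_le_mulVec (hY : Y.IsMetzler) {v : n → ℝ} {i : n} (hv : ∀ k, v i ≤ v k) :
    (∑ k, Y i k) * v i ≤ (Y *ᵥ v) i := by
  rw [sum_mul]
  refine sum_le_sum fun k _ => ?_
  rcases eq_or_ne i k with rfl | hik
  · rfl
  · exact mul_le_mul_of_nonneg_left (hv k) (hY i k hik)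

theorem nonneg_of_mul_nonpos (hY : Y.IsMetzler) (hrow : ∀ i, ∑ k, Y i k < 0)
    {m : Type*} {R : Matrix n m ℝ} (hYR : ∀ i j, (Y * R) i j ≤ 0) (i : n) (j : m) :
    0 ≤ R i j := by
  -- minimum principle: look at the smallest entry of the `j`-th column
  obtain ⟨i₀, -, hmin⟩ := exists_min_image univ (fun k => R k j) ⟨i, mem_univ i⟩
  refine (hmin i (mem_univ i)).trans' (not_lt.1 fun hneg => ?_)
  have hcol : (∑ k, Y i₀ k) * R i₀ j ≤ (Y * R) i₀ j :=
    hY.row_sum_mul_le_mulVec (v := fun k => R k j) fun k => hmin k (mem_univ k)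
  exact (mul_pos_of_neg_of_neg (hrow i₀) hneg).not_ge (hcol.trans (hYR i₀ j))

theorem pos_of_mulVec_neg (hY : Y.IsMetzler) {d : n → ℝ} (hd : ∀ i, 0 ≤ d i)
    (hYd : ∀ i, (Y *ᵥ d) i < 0) (i : n) : 0 < d i := by
  refine (hd i).lt_of_ne fun hdi => (hYd i).not_ge (sum_nonneg fun j _ => ?_)
  rcases eq_or_ne i j with rfl | hij
  · simp [← hdi]
  · exact mul_nonneg (hY i j hij) (hd j)

variable [DecidableEq n]

theorem diagonal_conj (hY : Y.IsMetzler) {d : n → ℝ} (hd : ∀ i, 0 < d i) :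
    (diagonal d⁻¹ * Y * diagonal d).IsMetzler := fun i j hij => by
  simpa [diagonal_mul, mul_diagonal] using
    mul_nonneg (mul_nonneg (inv_nonneg.2 (hd i).le) (hY i j hij)) (hd j).le

theorem re_lt_zero_of_row_sum_neg (hY : Y.IsMetzler) (hrow : ∀ i, ∑ j, Y i j < 0) {z : ℂ}
    (hz : z ∈ eigSet Y) : z.re < 0 := by
  have hev : Module.End.HasEigenvalue (toLin' (Y.map (algebraMap ℝ ℂ))) z := by
    rwa [Module.End.hasEigenvalue_iff_isRoot_charpoly, charpoly_toLin']
  obtain ⟨k, hk⟩ := eigenvalue_mem_ball hev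
  rw [mem_closedBall_iff_norm] at hk
  have hoff : ∑ j ∈ univ.erase k, ‖(Y.map (algebraMap ℝ ℂ)) k j‖ = ∑ j ∈ univ.erase k, Y k j :=
    sum_congr rfl fun j hj => by
      simp [abs_of_nonneg (hY k j (ne_of_mem_erase hj).symm)]
  calc z.re = (z - Y k k).re + Y k k := by simp
    _ ≤ ‖z - (Y.map (algebraMap ℝ ℂ)) k k‖ + Y k k := by
        gcongr; simpa using Complex.re_le_norm (z - Y k k)
    _ ≤ ∑ j ∈ univ.erase k, Y k j + Y k k := by gcongr; exact hoff ▸ hk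
    _ = ∑ j, Y k j := sum_erase_add _ _ (mem_univ k)
    _ < 0 := hrow k

theorem re_lt_zero_of_mulVec_neg (hY : Y.IsMetzler) {d : n → ℝ}
    (hd : ∀ i, 0 ≤ d i) (hYd : ∀ i, (Y *ᵥ d) i < 0) {z : ℂ} (hz : z ∈ eigSet Y) :
    z.re < 0 := by
  have hpos := hY.pos_of_mulVec_neg hd hYd
  refine (hY.diagonal_conj hpos).re_lt_zero_of_row_sum_neg (fun i => ?_) ?_
  · have : ∑ j, (diagonal d⁻¹ * Y * diagonal d) i j = (d i)⁻¹ * (Y *ᵥ d) i := by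
      simp [diagonal_mul, mul_diagonal, mulVec, dotProduct, mul_sum, mul_assoc]
    rw [this]
    exact mul_neg_of_pos_of_neg (inv_pos.2 (hpos i)) (hYd i)
  · have hchar : (diagonal d⁻¹ * Y * diagonal d).charpoly = Y.charpoly := by
      rw [Matrix.mul_assoc, charpoly_mul_comm, Matrix.mul_assoc, diagonal_mul_diagonal]
      simp [fun i => mul_inv_cancel₀ (hpos i).ne', ← Pi.one_def]
    rwa [eigSet, Set.mem_ofPred_eq, charpoly_map, hchar, ← charpoly_map]

end IsMetzler

theorem ofReal_mem_eigSet_iff [DecidableEq n] {Y : Matrix n n ℝ} {t : ℝ} :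
    (t : ℂ) ∈ eigSet Y ↔ t ∈ spectrum ℝ Y := by
  rw [mem_spectrum_iff_isRoot_charpoly, eigSet, Set.mem_ofPred_eq, charpoly_map]
  exact isRoot_map_iff (algebraMap ℝ ℂ).injective

end Matrix

namespace spectrum

variable {R A : Type*} [CommRing R] [Ring A] [Algebra R A] {x : A} {s t : R}

theorem sub_mul_resolvent (ht : t ∈ resolventSet R x) :
    (algebraMap R A t - x) * resolvent x t = 1 :=
  Ring.mul_inverse_cancel _ (mem_resolventSet_iff.1 ht)

theorem resolvent_mul_sub (ht : t ∈ resolventSet R x) :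
    resolvent x t * (algebraMap R A t - x) = 1 :=
  Ring.inverse_mul_cancel _ (mem_resolventSet_iff.1 ht)

/-- The first resolvent identity `R s - R t = (t - s) R t R s`, rearranged. -/
theorem sub_smul_resolvent_mul_resolvent (hs : s ∈ resolventSet R x)
    (ht : t ∈ resolventSet R x) :
    ((t - s) • resolvent x t - 1) * resolvent x s = -resolvent x t := by
  have : (t - s) • (1 : A) - (algebraMap R A t - x) = -(algebraMap R A s - x) := by
    simp only [Algebra.algebraMap_eq_smul_one, sub_smul]; abel
  calc ((t - s) • resolvent x t - 1) * resolvent x s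
      = resolvent x t * ((t - s) • 1 - (algebraMap R A t - x)) * resolvent x s := by
        rw [mul_sub, resolvent_mul_sub ht, mul_smul_comm, mul_one]
    _ = -resolvent x t := by
        rw [this, mul_neg, neg_mul, mul_assoc, sub_mul_resolvent hs, mul_one]

end spectrum

namespace Matrix

open spectrum

variable {n : Type*} [Fintype n] [DecidableEq n] {Y : Matrix n n ℝ}

theorem continuousOn_resolvent : ContinuousOn (resolvent Y) (resolventSet ℝ Y) := by
  intro t ht
  have hdet : (algebraMap ℝ (Matrix n n ℝ) t - Y).det ≠ 0 :=
    ((isUnit_iff_isUnit_det _).1 (mem_resolventSet_iff.1 ht)).ne_zero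
  have hinv : ContinuousAt Inv.inv (algebraMap ℝ (Matrix n n ℝ) t - Y) :=
    continuousAt_matrix_inv _ (Ring.inverse_eq_inv' (G₀ := ℝ) ▸ continuousAt_inv₀ hdet)
  have : resolvent Y = fun t => (algebraMap ℝ (Matrix n n ℝ) t - Y)⁻¹ := by
    funext t; exact (nonsing_inv_eq_ringInverse _).symm
  rw [this]
  have hsub : Continuous fun t => algebraMap ℝ (Matrix n n ℝ) t - Y :=
    (continuous_algebraMap ℝ _).sub continuous_const
  exact (hinv.comp (f := fun t => algebraMap ℝ (Matrix n n ℝ) t - Y)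
    hsub.continuousAt).continuousWithinAt

theorem resolvent_nonneg_of_row_sum_lt (hY : Y.IsMetzler) {t : ℝ} (ht : t ∈ resolventSet ℝ Y)
    (hrow : ∀ i, ∑ j, Y i j < t) : ∀ i j, 0 ≤ resolvent Y t i j := by
  refine IsMetzler.nonneg_of_mul_nonpos (Y := Y - algebraMap ℝ _ t) (fun i j hij => ?_)
    (fun i => ?_) fun i j => ?_
  · simpa [algebraMap_eq_diagonal, hij] using hY i j hij
  · simpa [algebraMap_eq_diagonal, diagonal_apply, sum_sub_distrib] using hrow i
  · rw [← neg_sub, Matrix.neg_mul, sub_mul_resolvent ht]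
    by_cases hij : i = j <;> simp [hij]

theorem exists_pos_resolvent_nonneg {a : ℝ} (ha : a ∈ resolventSet ℝ Y)
    (hRa : ∀ i j, 0 ≤ resolvent Y a i j) :
    ∃ δ > 0, ∀ s ∈ resolventSet ℝ Y, a - δ ≤ s → s ≤ a → ∀ i j, 0 ≤ resolvent Y s i j := by
  set K := ∑ i, ∑ j, resolvent Y a i j
  have hK : 0 ≤ K := sum_nonneg fun i _ => sum_nonneg fun j _ => hRa i j
  refine ⟨(K + 1)⁻¹, by positivity, fun s hs hδs hsa => ?_⟩
  refine IsMetzler.nonneg_of_mul_nonpos (Y := (a - s) • resolvent Y a - 1)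
    (fun i j hij => ?_) (fun i => ?_) fun i j => ?_
  · simpa [one_apply, hij] using mul_nonneg (sub_nonneg.2 hsa) (hRa i j)
  · have hrow : ∑ j, resolvent Y a i j ≤ K :=
      single_le_sum (f := fun i => ∑ j, resolvent Y a i j)
        (fun i _ => sum_nonneg fun j _ => hRa i j) (mem_univ i)
    have : (a - s) * ∑ j, resolvent Y a i j < 1 :=
      calc (a - s) * ∑ j, resolvent Y a i j ≤ (K + 1)⁻¹ * K :=
            mul_le_mul (by linarith) hrow (sum_nonneg fun j _ => hRa i j) (by positivity)
        _ < 1 := by rw [inv_mul_lt_one₀ (by positivity)]; linarith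
    simpa [one_apply, sum_sub_distrib, mul_sum] using this
  · simpa [sub_smul_resolvent_mul_resolvent hs ha] using hRa i j

theorem IsMetzler.resolvent_nonneg (hY : Y.IsMetzler)
    (hres : ∀ t, 0 ≤ t → t ∈ resolventSet ℝ Y) {t : ℝ} (ht : 0 ≤ t) :
    ∀ i j, 0 ≤ resolvent Y t i j := by
  obtain ⟨M, hM⟩ := (Set.finite_range fun i => ∑ j, Y i j).bddAbove
  set T := max t M + 1
  set S := {u : ℝ | ∀ i j, 0 ≤ resolvent Y u i j}
  have hT : T ∈ S := resolvent_nonneg_of_row_sum_lt hY (hres T (by positivity)) fun i => by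
    linarith [hM ⟨i, rfl⟩, le_max_right t M]
  have hclosed : IsClosed (S ∩ Set.Icc 0 T) := by
    have : IsClosed {R : Matrix n n ℝ | ∀ i j, 0 ≤ R i j} := by
      simp only [Set.ofPred_forall]
      exact isClosed_iInter fun i => isClosed_iInter fun j =>
        isClosed_le continuous_const (by fun_prop)
    rw [Set.inter_comm]
    exact (continuousOn_resolvent.mono fun u hu => hres u hu.1).preimage_isClosed_of_isClosed
      isClosed_Icc this
  refine hclosed.Icc_subset_of_forall_exists_lt hT ?_ ⟨ht, by linarith [le_max_left t M]⟩
  rintro x ⟨hxS, hx0, -⟩ y hyx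
  obtain ⟨δ, hδ, hnear⟩ := exists_pos_resolvent_nonneg (hres x hx0.le) hxS
  set u := max (max y 0) (x - δ)
  have hu0 : 0 ≤ u := (le_max_right y 0).trans (le_max_left _ _)
  have hux : u < x := max_lt (max_lt hyx hx0) (by linarith)
  exact ⟨u, hnear u (hres u hu0) (le_max_right _ _) hux.le,
    le_max_of_le_left (le_max_left y 0), hux⟩

end Matrix

/-- For a real matrix `Y` with nonnegative off-diagonal entries,
`s(Y) < 0` (every eigenvalue has strictly negative real part) iff `Y` is invertible and
`-Y⁻¹` is entrywise nonnegative. -/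
theorem stmt10 {n : ℕ} (Y : Matrix (Fin n) (Fin n) ℝ)
    (hYoffdiag : ∀ i j, i ≠ j → 0 ≤ Y i j) :
    (∀ z ∈ eigSet Y, z.re < 0) ↔ (IsUnit Y.det ∧ ∀ i j, 0 ≤ (-Y⁻¹) i j) := by
  have hY : Y.IsMetzler := hYoffdiag
  constructor
  · intro H
    have hres : ∀ t : ℝ, 0 ≤ t → t ∈ resolventSet ℝ Y := fun t ht => not_not.1 fun hmem => by
      have := H _ (ofReal_mem_eigSet_iff.2 hmem)
      rw [Complex.ofReal_re] at this
      linarith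
    have hdet : IsUnit Y.det := (isUnit_iff_isUnit_det Y).1 <| by
      simpa using spectrum.mem_resolventSet_iff.1 (hres 0 le_rfl)
    have hR0 : resolvent Y (0 : ℝ) = -Y⁻¹ := by
      rw [resolvent, map_zero, zero_sub, ← nonsing_inv_eq_ringInverse]
      refine inv_eq_right_inv ?_
      rw [neg_mul_neg, mul_nonsing_inv _ hdet]
    exact ⟨hdet, hR0 ▸ hY.resolvent_nonneg hres le_rfl⟩
  · rintro ⟨hdet, hinv⟩ z hz
    refine hY.re_lt_zero_of_mulVec_neg (d := -Y⁻¹ *ᵥ 1) (fun i => ?_) (fun i => ?_) hz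
    · simp only [mulVec, dotProduct, Pi.one_apply, mul_one]
      exact sum_nonneg fun j _ => hinv i j
    · rw [mulVec_mulVec, Matrix.mul_neg, mul_nonsing_inv _ hdet]
      simp [neg_mulVec]
end
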